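/- arXiv:1910.04848 — 2 statements merged into one kernel-verified Lean document; each statement's English description precedes it below -/
import Mathlib

section
/- For every preflow x in a flow network there exists a flow x' with x'(i,j) ≤ x(i,j) for every ordered pair (i,j) of distinct nodes and with the same value, |x'| = |x|. (Any preflow can be transformed into a flow by returning the excess at intermediate nodes towards the source, without altering the amount of flow arriving at the sink.) -/
open Finset

variable {V : Type*}

/-- The excess of node `v` under `x`: total inflow minus total outflow. -/
def excess [Fintype V] (x : V → V → ℝ) (v : V) : ℝ :=
  (∑ j, x j v) - ∑ j, x v j

/-- `x` is capacity-feasible for capacities `u`: `0 ≤ x i j ≤ u i j` on distinct pairs. -/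
def IsCapFeasible (u x : V → V → ℝ) : Prop :=
  ∀ i j, i ≠ j → 0 ≤ x i j ∧ x i j ≤ u i j

/-- A preflow: capacity-feasible with nonnegative excess at every node other than `s`. -/
def IsPreflow [Fintype V] (u : V → V → ℝ) (s : V) (x : V → V → ℝ) : Prop :=
  IsCapFeasible u x ∧ ∀ v, v ≠ s → 0 ≤ excess x v

/-- A flow: capacity-feasible with zero excess at every node other than `s` and `t`. -/
def IsFlow [Fintype V] (u : V → V → ℝ) (s t : V) (x : V → V → ℝ) : Prop :=
  IsCapFeasible u x ∧ ∀ v, v ≠ s → v ≠ t → excess x v = 0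

/-- Residual capacity of the pair `(i,j)` with respect to `x`. -/
def res (u x : V → V → ℝ) (i j : V) : ℝ := u i j + x j i - x i j

/-- A labeling `d` is valid w.r.t. `x`: `d t = 0` and `d i ≤ d j + 1` across residual arcs. -/
def IsValidLabeling [Fintype V] (u x : V → V → ℝ) (t : V) (d : V → ℕ) : Prop :=
  d t = 0 ∧ ∀ i j, i ≠ j → 0 < res u x i j → d i ≤ d j + 1

/-!
Among all `y` with `0 ≤ y ≤ x` off the diagonal (and `y = x` on it) whose excess is at least
`excess x t` at `t` and nonnegative at the other nodes `≠ s`, pick one of least total flow; the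
set is compact and contains `x`. If such a `y` had strictly more excess at some node
`v ≠ s` than demanded, some arc into `v` would carry positive flow, and lowering it would keep `y`
in the set while decreasing the total flow. So `y` meets the demands exactly, i.e. is a flow of
value `excess x t`.
-/

section Pruning

variable [Fintype V]

def demandBox (lo x : V → V → ℝ) (D : Set V) (c : V → ℝ) : Set (V → V → ℝ) :=
  Set.Icc lo x ∩ {y | ∀ w ∈ D, c w ≤ excess y w}

theorem continuous_excess (v : V) : Continuous fun y : V → V → ℝ => excess y v := by
  unfold excess
  fun_prop

theorem isCompact_demandBox (lo x : V → V → ℝ) (D : Set V) (c : V → ℝ) :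
    IsCompact (demandBox lo x D c) := by
  refine isCompact_Icc.inter_right ?_
  simp only [Set.ofPred_forall]
  exact isClosed_biInter fun w _ => isClosed_le continuous_const (continuous_excess w)

variable [DecidableEq V]

theorem excess_sub_ite (y : V → V → ℝ) (j v : V) (ε : ℝ) (w : V) :
    excess (fun a b => y a b - if a = j ∧ b = v then ε else 0) w
      = excess y w - (if w = v then ε else 0) + (if w = j then ε else 0) := by
  unfold excess
  rw [sum_sub_distrib, sum_sub_distrib]
  have h_in : ∑ a : V, (if a = j ∧ w = v then ε else 0) = if w = v then ε else 0 := by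
    by_cases h : w = v <;> simp [h]
  have h_out : ∑ b : V, (if w = j ∧ b = v then ε else 0) = if w = j then ε else 0 := by
    by_cases h : w = j <;> simp [h]
  rw [h_in, h_out]
  ring

theorem sum_sum_sub_ite (y : V → V → ℝ) (j v : V) (ε : ℝ) :
    ∑ a, ∑ b, (y a b - if a = j ∧ b = v then ε else 0) = ∑ a, ∑ b, y a b - ε := by
  simp [sum_sub_distrib, ite_and]

theorem exists_pos_inflow_of_excess_pos {y : V → V → ℝ} {v : V}
    (h_out : ∀ a, a ≠ v → 0 ≤ y v a) (h : 0 < excess y v) : ∃ j, j ≠ v ∧ 0 < y j v := by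
  by_contra! h_in
  have h_split : excess y v = (∑ a ∈ univ.erase v, y a v) - ∑ a ∈ univ.erase v, y v a := by
    unfold excess
    rw [← add_sum_erase univ _ (mem_univ v), ← add_sum_erase univ (y v) (mem_univ v)]
    ring
  have := sum_nonpos (s := univ.erase v) fun a ha => h_in a (ne_of_mem_erase ha)
  have := sum_nonneg (s := univ.erase v) fun a ha => h_out a (ne_of_mem_erase ha)
  linarith

theorem sub_ite_mem_demandBox {lo x y : V → V → ℝ} {D : Set V} {c : V → ℝ} {j v : V} {ε : ℝ}
    (hy : y ∈ demandBox lo x D c) (hε : 0 ≤ ε) (h_lo : lo j v ≤ y j v - ε)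
    (h_excess : ε ≤ excess y v - c v) :
    (fun a b => y a b - if a = j ∧ b = v then ε else 0) ∈ demandBox lo x D c := by
  obtain ⟨⟨hy_lo, hy_x⟩, hy_c⟩ := hy
  refine ⟨⟨fun a b => ?_, fun a b => ?_⟩, fun w hw => ?_⟩
  · by_cases h : a = j ∧ b = v
    · obtain ⟨rfl, rfl⟩ := h
      simpa using h_lo
    · simpa [h] using hy_lo a b
  · have := hy_x a b
    dsimp only
    split_ifs <;> linarith
  · have := hy_c w hw
    rw [excess_sub_ite]
    split_ifs <;> subst_vars <;> linarith

theorem excess_le_of_isMinOn {lo x y : V → V → ℝ} {D : Set V} {c : V → ℝ}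
    (h_lo : ∀ a b, a ≠ b → lo a b = 0) (hy : y ∈ demandBox lo x D c)
    (h_min : IsMinOn (fun z => ∑ a, ∑ b, z a b) (demandBox lo x D c) y)
    {v : V} (hc : 0 ≤ c v) : excess y v ≤ c v := by
  by_contra! h_gt
  obtain ⟨j, hjv, hj⟩ := exists_pos_inflow_of_excess_pos
    (fun a ha => h_lo v a ha.symm ▸ hy.1.1 v a) (hc.trans_lt h_gt)
  set ε := min (y j v) (excess y v - c v)
  have hε : 0 < ε := lt_min hj (sub_pos.mpr h_gt)
  have h_mem := sub_ite_mem_demandBox hy hε.le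
    (by rw [h_lo j v hjv]; exact sub_nonneg.mpr (min_le_left _ _)) (min_le_right _ _)
  have h_le : ∑ a, ∑ b, y a b ≤ ∑ a, ∑ b, (y a b - if a = j ∧ b = v then ε else 0) := h_min h_mem
  rw [sum_sum_sub_ite] at h_le
  linarith

theorem exists_mem_demandBox_excess_eq {lo x : V → V → ℝ} {D : Set V} {c : V → ℝ}
    (h_lo : ∀ a b, a ≠ b → lo a b = 0) (hc : ∀ v ∈ D, 0 ≤ c v)
    (h_ne : (demandBox lo x D c).Nonempty) :
    ∃ y ∈ demandBox lo x D c, ∀ v ∈ D, excess y v = c v := by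
  obtain ⟨y, hy, h_min⟩ := (isCompact_demandBox lo x D c).exists_isMinOn h_ne
    (by fun_prop : Continuous fun z : V → V → ℝ => ∑ a, ∑ b, z a b).continuousOn
  exact ⟨y, hy, fun v hv =>
    (excess_le_of_isMinOn h_lo hy h_min (hc v hv)).antisymm (hy.2 v hv)⟩

end Pruning

theorem exists_flow_le_preflow_same_value_general [Fintype V] (s t : V) (hst : s ≠ t)
    (u : V → V → ℝ)
    (x : V → V → ℝ) (hx : IsPreflow u s x) :
    ∃ x' : V → V → ℝ, IsFlow u s t x' ∧ (∀ i j, i ≠ j → x' i j ≤ x i j) ∧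
      excess x' t = excess x t := by
  classical
  obtain ⟨h_cap, h_excess⟩ := hx
  set lo : V → V → ℝ := fun i j => if i = j then x i j else 0
  set c : V → ℝ := fun w => if w = t then excess x t else 0
  have hx_mem : x ∈ demandBox lo x {s}ᶜ c := by
    refine ⟨⟨fun i j => ?_, le_rfl⟩, fun w hw => ?_⟩
    · by_cases h : i = j
      · simp [lo, h]
      · simpa [lo, h] using (h_cap i j h).1
    · by_cases h : w = t
      · simp [c, h]
      · simpa [c, h] using h_excess w hw
  obtain ⟨y, ⟨⟨hy_lo, hy_x⟩, -⟩, hy_c⟩ := exists_mem_demandBox_excess_eq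
    (fun a b h => if_neg h) (fun _ _ => ite_nonneg (h_excess t hst.symm) le_rfl) ⟨x, hx_mem⟩
  refine ⟨y, ⟨fun i j h => ⟨?_, (hy_x i j).trans (h_cap i j h).2⟩, fun v hvs hvt => ?_⟩,
    fun i j _ => hy_x i j, ?_⟩
  · simpa [lo, h] using hy_lo i j
  · simpa [c, hvt] using hy_c v hvs
  · simpa [c] using hy_c t hst.symm

/-- Every preflow can be converted into a flow of the same value that is pointwise
no larger on every arc. -/
theorem exists_flow_le_preflow_same_value [Fintype V] (s t : V) (hst : s ≠ t)
    (u : V → V → ℝ) (hu : ∀ i j, i ≠ j → 0 ≤ u i j)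
    (x : V → V → ℝ) (hx : IsPreflow u s x) :
    ∃ x' : V → V → ℝ, IsFlow u s t x' ∧ (∀ i j, i ≠ j → x' i j ≤ x i j) ∧
      excess x' t = excess x t :=
  exists_flow_le_preflow_same_value_general s t hst u x hx
end

section
/- (Contraction Lemma, quantitative core.) Let k ≥ 2 be an integer, let the flow network have n = |N| ≥ 2 nodes, and define Q = ⌈log_k(4n)⌉, ε = k^{−Q}, M = k^{2Q}. Let Δ > 0 and Δ' = ε⁷Δ, and let x and y be capacity-feasible functions. Let v be a node such that: (a) for every node j ≠ v, either u(v,j) + u(j,v) < ε⁵Δ (the pair is small) or u(v,j) + u(j,v) ≥ 2MΔ (the pair is large); (b) for every large pair {(v,j),(j,v)}, exactly one of r_{vj}(x) and r_{jv}(x) is < MΔ; define Anti to be the set of ordered pairs (i,j) incident to v whose bi-capacity is at least 2MΔ and with r_{ij}(x) < MΔ, and define IMB(v,x) = e_x(v) + Σ_{(j,v)∈Anti} r_{jv}(x) − Σ_{(v,j)∈Anti} r_{vj}(x); assume (c) |IMB(v,x)| > ε⁴Δ and (d) |e_y(v)| < Δ'. Then there exists a pair (i,j) ∈ Anti with r_{ij}(y)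 > MΔ'. -/
open Finset

variable {V : Type*}

/-!
Compare the imbalance of `v` under `x` and under `y`. The residual capacity of an anti-abundant
pair is its capacity plus or minus the net flow on it, so in `IMB(v, x) - IMB(v, y)` the
anti-abundant pairs cancel and only the net flows on the small pairs remain, each bounded by the
pair's bi-capacity `< ε⁵ Δ`. If no anti-abundant arc had residual capacity above `M Δ' = ε⁵ Δ`
under `y`, then `|IMB(v, y)| ≤ |e_y(v)|` plus `ε⁵ Δ` per anti-abundant pair. Altogether
`|IMB(v, x)| < Δ' + n ε⁵ Δ ≤ ε⁴ Δ` because `4 n ε ≤ 1`, contradicting (c).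
-/

variable {u x y : V → V → ℝ} {i j : V}

theorem IsCapFeasible.res_nonneg (hx : IsCapFeasible u x) (hij : i ≠ j) : 0 ≤ res u x i j := by
  have := hx i j hij
  have := hx j i hij.symm
  unfold res
  linarith

theorem IsCapFeasible.abs_netFlow_sub_le (hx : IsCapFeasible u x) (hy : IsCapFeasible u y)
    (hij : i ≠ j) : |(x i j - x j i) - (y i j - y j i)| ≤ u i j + u j i := by
  have := hx i j hij
  have := hx j i hij.symm
  have := hy i j hij
  have := hy j i hij.symm
  rw [abs_le]
  constructor <;> linarith

section Imbalance

variable [Fintype V]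

/-- The paper's `IMB(v, x)`, with `A` and `B` the nodes `j` for which `(j, v)`, resp. `(v, j)`,
is anti-abundant. -/
def imbalance (u x : V → V → ℝ) (A B : Finset V) (v : V) : ℝ :=
  excess x v + ∑ j ∈ A, res u x j v - ∑ j ∈ B, res u x v j

theorem abs_imbalance_le {A B : Finset V} {v : V} {c : ℝ} (hy : IsCapFeasible u y)
    (hvA : v ∉ A) (hvB : v ∉ B) (hA : ∀ j ∈ A, res u y j v ≤ c)
    (hB : ∀ j ∈ B, res u y v j ≤ c) :
    |imbalance u y A B v| ≤ |excess y v| + (#A + #B) * c := by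
  have hAnn : 0 ≤ ∑ j ∈ A, res u y j v :=
    sum_nonneg fun j hj => hy.res_nonneg (ne_of_mem_of_not_mem hj hvA)
  have hBnn : 0 ≤ ∑ j ∈ B, res u y v j :=
    sum_nonneg fun j hj => hy.res_nonneg (ne_of_mem_of_not_mem hj hvB).symm
  have hAc : ∑ j ∈ A, res u y j v ≤ #A * c := by
    simpa using sum_le_card_nsmul A _ c hA
  have hBc : ∑ j ∈ B, res u y v j ≤ #B * c := by
    simpa using sum_le_card_nsmul B _ c hB
  have := neg_abs_le (excess y v)
  have := le_abs_self (excess y v)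
  rw [imbalance, abs_le]
  constructor <;> linarith

variable [DecidableEq V]

theorem imbalance_eq_sum_compl {A B : Finset V} (hAB : Disjoint A B) (v : V) :
    imbalance u x A B v
      = ∑ j ∈ (A ∪ B)ᶜ, (x j v - x v j) + (∑ j ∈ A, u j v - ∑ j ∈ B, u v j) := by
  have hexcess : excess x v = ∑ j, (x j v - x v j) := (sum_sub_distrib _ _).symm
  rw [imbalance, hexcess, ← sum_add_sum_compl (A ∪ B), sum_union hAB]
  simp only [res, sum_add_distrib, sum_sub_distrib]
  ring

theorem imbalance_sub_imbalance {A B : Finset V} (hAB : Disjoint A B) (v : V) :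
    imbalance u x A B v - imbalance u y A B v
      = ∑ j ∈ (A ∪ B)ᶜ, ((x j v - x v j) - (y j v - y v j)) := by
  simp only [imbalance_eq_sum_compl hAB, sum_sub_distrib]
  ring

theorem abs_imbalance_le_of_res_le {A B : Finset V} {v : V} {c : ℝ}
    (hx : IsCapFeasible u x) (hy : IsCapFeasible u y) (hAB : Disjoint A B)
    (hvA : v ∉ A) (hvB : v ∉ B) (hc : 0 ≤ c)
    (hA : ∀ j ∈ A, res u y j v ≤ c) (hB : ∀ j ∈ B, res u y v j ≤ c)
    (hsmall : ∀ j ∉ A ∪ B, j ≠ v → u v j + u j v ≤ c) :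
    |imbalance u x A B v| ≤ |excess y v| + Fintype.card V * c := by
  have hdiff : |imbalance u x A B v - imbalance u y A B v| ≤ #(A ∪ B)ᶜ * c := by
    rw [imbalance_sub_imbalance hAB]
    refine (abs_sum_le_sum_abs _ _).trans ?_
    refine (sum_le_card_nsmul _ _ c fun j hj => ?_).trans (nsmul_eq_mul _ _).le
    rcases eq_or_ne j v with rfl | hjv
    · simpa using hc
    · rw [mem_compl] at hj
      exact (hx.abs_netFlow_sub_le hy hjv).trans (add_comm (u j v) _ ▸ hsmall j hj hjv)
  have hcard : #A + #B + #(A ∪ B)ᶜ = Fintype.card V := by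
    rw [← card_union_of_disjoint hAB, card_compl]
    exact Nat.add_sub_of_le (card_le_univ _)
  calc |imbalance u x A B v|
      ≤ |imbalance u y A B v| + |imbalance u x A B v - imbalance u y A B v| := by
        simpa using abs_add_le (imbalance u y A B v) (imbalance u x A B v - imbalance u y A B v)
    _ ≤ |excess y v| + (#A + #B) * c + #(A ∪ B)ᶜ * c :=
        add_le_add (abs_imbalance_le hy hvA hvB hA hB) hdiff
    _ = |excess y v| + Fintype.card V * c := by rw [← hcard]; push_cast; ring

end Imbalance

section AntiAbundant

open Classical

variable [Fintype V] (u x : V → V → ℝ) (v : V) (L R : ℝ)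

/-- The nodes `j` such that `(j, v)` is anti-abundant: bi-capacity at least `L = 2MΔ` and
residual capacity below `R = MΔ`. -/
noncomputable def antiIn : Finset V :=
  univ.filter fun j => j ≠ v ∧ L ≤ u j v + u v j ∧ res u x j v < R

noncomputable def antiOut : Finset V :=
  univ.filter fun j => j ≠ v ∧ L ≤ u v j + u j v ∧ res u x v j < R

variable {u x v L R} {j : V}

theorem mem_antiIn : j ∈ antiIn u x v L R ↔ j ≠ v ∧ L ≤ u j v + u v j ∧ res u x j v < R := by
  simp [antiIn]

theorem mem_antiOut : j ∈ antiOut u x v L R ↔ j ≠ v ∧ L ≤ u v j + u j v ∧ res u x v j < R := by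
  simp [antiOut]

theorem self_notMem_antiIn : v ∉ antiIn u x v L R := fun h => (mem_antiIn.1 h).1 rfl

theorem self_notMem_antiOut : v ∉ antiOut u x v L R := fun h => (mem_antiOut.1 h).1 rfl

theorem disjoint_antiIn_antiOut
    (hb : ∀ j, j ≠ v → L ≤ u v j + u j v → (res u x v j < R ↔ ¬ res u x j v < R)) :
    Disjoint (antiIn u x v L R) (antiOut u x v L R) := by
  refine disjoint_left.2 fun j hjA hjB => ?_
  rw [mem_antiIn] at hjA
  rw [mem_antiOut] at hjB
  exact (hb j hjA.1 hjB.2.1).1 hjB.2.2 hjA.2.2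

theorem add_le_of_notMem_antiIn_union_antiOut {c : ℝ}
    (ha : ∀ j, j ≠ v → u v j + u j v < c ∨ L ≤ u v j + u j v)
    (hb : ∀ j, j ≠ v → L ≤ u v j + u j v → (res u x v j < R ↔ ¬ res u x j v < R))
    (hj : j ∉ antiIn u x v L R ∪ antiOut u x v L R) (hjv : j ≠ v) : u v j + u j v ≤ c := by
  rw [mem_union, mem_antiIn, mem_antiOut, add_comm (u j v)] at hj
  rcases ha j hjv with hlt | hlarge
  · exact hlt.le
  · have := hb j hjv hlarge
    tauto

end AntiAbundant

theorem pow_seven_mul_add_mul_pow_five_mul_le {ε n Δ : ℝ} (hε : 0 ≤ ε) (hn : 1 ≤ n)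
    (hεn : 4 * n * ε ≤ 1) (hΔ : 0 ≤ Δ) : ε ^ 7 * Δ + n * (ε ^ 5 * Δ) ≤ ε ^ 4 * Δ := by
  have hε1 : ε ≤ 1 := by nlinarith
  have hsum : ε ^ 3 + n * ε ≤ 1 := by
    have : ε ^ 3 ≤ ε := pow_le_of_le_one hε hε1 (by norm_num)
    nlinarith
  calc ε ^ 7 * Δ + n * (ε ^ 5 * Δ) = (ε ^ 3 + n * ε) * (ε ^ 4 * Δ) := by ring
    _ ≤ 1 * (ε ^ 4 * Δ) := by gcongr
    _ = ε ^ 4 * Δ := one_mul _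

open Classical in
theorem contraction_lemma_core_general [Fintype V]
    (k Q : ℕ)
    (hQ : 4 * Fintype.card V ≤ k ^ Q)
    (ε M : ℝ) (hε : ε = ((k : ℝ) ^ Q)⁻¹) (hM : M = (k : ℝ) ^ (2 * Q))
    (Δ Δ' : ℝ) (hΔ : 0 < Δ) (hΔ' : Δ' = ε ^ 7 * Δ)
    (u : V → V → ℝ)
    (x y : V → V → ℝ) (hx : IsCapFeasible u x) (hy : IsCapFeasible u y)
    (v : V)
    (ha : ∀ j, j ≠ v → u v j + u j v < ε ^ 5 * Δ ∨ 2 * M * Δ ≤ u v j + u j v)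
    (hb : ∀ j, j ≠ v → 2 * M * Δ ≤ u v j + u j v →
      (res u x v j < M * Δ ↔ ¬ res u x j v < M * Δ))
    (hc : ε ^ 4 * Δ <
      |excess x v
        + ∑ j ∈ univ.filter
            (fun j => j ≠ v ∧ 2 * M * Δ ≤ u j v + u v j ∧ res u x j v < M * Δ),
            res u x j v
        - ∑ j ∈ univ.filter
            (fun j => j ≠ v ∧ 2 * M * Δ ≤ u v j + u j v ∧ res u x v j < M * Δ),
            res u x v j|)
    (hd : |excess y v| < Δ') :
    ∃ j, j ≠ v ∧ 2 * M * Δ ≤ u v j + u j v ∧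
      ((res u x v j < M * Δ ∧ M * Δ' < res u y v j) ∨
       (res u x j v < M * Δ ∧ M * Δ' < res u y j v)) := by
  by_contra! hcon
  set A := antiIn u x v (2 * M * Δ) (M * Δ)
  set B := antiOut u x v (2 * M * Δ) (M * Δ)
  have hQ' : (4 * Fintype.card V : ℝ) ≤ (k : ℝ) ^ Q := by exact_mod_cast hQ
  have hn : (1 : ℝ) ≤ Fintype.card V := by exact_mod_cast Fintype.card_pos_iff.2 ⟨v⟩
  have hkQpos : (0 : ℝ) < (k : ℝ) ^ Q := by linarith
  have hε0 : 0 ≤ ε := by rw [hε]; positivity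
  have hεn : 4 * (Fintype.card V : ℝ) * ε ≤ 1 := by
    rwa [hε, ← div_eq_mul_inv, div_le_one hkQpos]
  have hMΔ' : M * Δ' = ε ^ 5 * Δ := by
    rw [hM, hΔ', hε, pow_mul']
    field_simp [hkQpos.ne']
  have hA : ∀ j ∈ A, res u y j v ≤ ε ^ 5 * Δ := fun j hj => by
    obtain ⟨hjv, hlarge, hres⟩ := mem_antiIn.1 hj
    exact hMΔ' ▸ (hcon j hjv (by linarith)).2 hres
  have hB : ∀ j ∈ B, res u y v j ≤ ε ^ 5 * Δ := fun j hj => by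
    obtain ⟨hjv, hlarge, hres⟩ := mem_antiOut.1 hj
    exact hMΔ' ▸ (hcon j hjv hlarge).1 hres
  have hstable := abs_imbalance_le_of_res_le hx hy (disjoint_antiIn_antiOut hb)
    self_notMem_antiIn self_notMem_antiOut (by positivity) hA hB
    fun j hj hjv => add_le_of_notMem_antiIn_union_antiOut ha hb hj hjv
  have hc' : ε ^ 4 * Δ < |imbalance u x A B v| := hc
  have := pow_seven_mul_add_mul_pow_five_mul_le hε0 hn hεn hΔ.le
  rw [hΔ'] at hd
  linarith

open Classical in
/-- Quantitative core of the Contraction Lemma: a node with no medium arcs and a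
large `Δ`-imbalance becomes incident to a bi-abundant arc by the `Δ' = ε⁷Δ` phase. -/
theorem contraction_lemma_core [Fintype V] (hn : 2 ≤ Fintype.card V)
    (s t : V) (hst : s ≠ t)
    (k Q : ℕ) (hk : 2 ≤ k)
    (hQpos : 0 < Q) (hQ : 4 * Fintype.card V ≤ k ^ Q)
    (hQmin : ∀ Q' : ℕ, 0 < Q' → 4 * Fintype.card V ≤ k ^ Q' → Q ≤ Q')
    (ε M : ℝ) (hε : ε = ((k : ℝ) ^ Q)⁻¹) (hM : M = (k : ℝ) ^ (2 * Q))
    (Δ Δ' : ℝ) (hΔ : 0 < Δ) (hΔ' : Δ' = ε ^ 7 * Δ)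
    (u : V → V → ℝ) (hu : ∀ i j, i ≠ j → 0 ≤ u i j)
    (x y : V → V → ℝ) (hx : IsCapFeasible u x) (hy : IsCapFeasible u y)
    (v : V)
    (ha : ∀ j, j ≠ v → u v j + u j v < ε ^ 5 * Δ ∨ 2 * M * Δ ≤ u v j + u j v)
    (hb : ∀ j, j ≠ v → 2 * M * Δ ≤ u v j + u j v →
      (res u x v j < M * Δ ↔ ¬ res u x j v < M * Δ))
    (hc : ε ^ 4 * Δ <
      |excess x v
        + ∑ j ∈ univ.filter
            (fun j => j ≠ v ∧ 2 * M * Δ ≤ u j v + u v j ∧ res u x j v < M * Δ),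
            res u x j v
        - ∑ j ∈ univ.filter
            (fun j => j ≠ v ∧ 2 * M * Δ ≤ u v j + u j v ∧ res u x v j < M * Δ),
            res u x v j|)
    (hd : |excess y v| < Δ') :
    ∃ j, j ≠ v ∧ 2 * M * Δ ≤ u v j + u j v ∧
      ((res u x v j < M * Δ ∧ M * Δ' < res u y v j) ∨
       (res u x j v < M * Δ ∧ M * Δ' < res u y j v)) :=
  contraction_lemma_core_general k Q hQ ε M hε hM Δ Δ' hΔ hΔ' u x y hx hy v ha hb hc hd
end
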